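/- Let E be a finite set and (M_n) a sequence of indecomposable Markov matrices on E with pseudo-inverses Q_n and invariant probabilities π_n. Assume: (i) |Q_n|² log(n)/n → 0; (ii) limsup_n |M_{n+1} − M_n| · n/log(n) < ∞; (iii) limsup_n |π_{n+1} − π_n| · sqrt(n/log(n)) < ∞. Then |Q_{n+1} − Q_n| → 0 and |π_{n+1} − π_n| → 0, so that Hypothesis 1 holds. -/
import Mathlib


open Filter Topology

section MarkovDefs

variable {E : Type*} [Fintype E] [DecidableEq E] [Nonempty E]

/-- `M` is a Markov matrix: nonnegative entries and rows summing to `1`. -/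
def IsMarkov (M : Matrix E E ℝ) : Prop :=
  (∀ x y, 0 ≤ M x y) ∧ ∀ x, ∑ y, M x y = 1

/-- `x` and `y` are related: `M^i(x,y) > 0` and `M^j(y,x) > 0` for some `i, j ≥ 0`. -/
def MRelated (M : Matrix E E ℝ) (x y : E) : Prop :=
  (∃ i : ℕ, 0 < (M ^ i) x y) ∧ (∃ j : ℕ, 0 < (M ^ j) y x)

/-- `x` is a recurrent state for `M`. -/
def MRecurrent (M : Matrix E E ℝ) (x : E) : Prop :=
  ∀ y, (∃ i : ℕ, 0 < (M ^ i) x y) → MRelated M x y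

/-- `M` is indecomposable: it has a unique recurrent class. -/
def Indecomposable (M : Matrix E E ℝ) : Prop :=
  (∃ x, MRecurrent M x) ∧ ∀ x y, MRecurrent M x → MRecurrent M y → MRelated M x y

/-- `M` is irreducible: all states communicate. -/
def MIrreducible (M : Matrix E E ℝ) : Prop :=
  ∀ x y, ∃ i : ℕ, 0 < (M ^ i) x y

/-- `π` is an invariant probability vector of `M`. -/
def IsInvariantProb (M : Matrix E E ℝ) (π : E → ℝ) : Prop :=
  (∀ x, 0 ≤ π x) ∧ (∑ x, π x = 1) ∧ ∀ y, ∑ x, π x * M x y = π y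

/-- The rank one matrix `Π(x,y) = π(y)`. -/
def PiMat (π : E → ℝ) : Matrix E E ℝ := Matrix.of fun _ y => π y

/-- `Q` is the pseudo-inverse of `-L = I - M`: `Q1 = 0` and `Q(I-M) = (I-M)Q = I-Π`. -/
def IsPseudoInverse (M : Matrix E E ℝ) (π : E → ℝ) (Q : Matrix E E ℝ) : Prop :=
  (∀ x, ∑ y, Q x y = 0) ∧ Q * (1 - M) = 1 - PiMat π ∧ (1 - M) * Q = 1 - PiMat π

/-- `|N| = max_{x,y} |N(x,y)|`. -/
noncomputable def matAbs (N : Matrix E E ℝ) : ℝ :=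
  Finset.univ.sup' Finset.univ_nonempty fun p : E × E => |N p.1 p.2|

/-- `|f| = max_x |f(x)|`. -/
noncomputable def vecAbs (f : E → ℝ) : ℝ :=
  Finset.univ.sup' Finset.univ_nonempty fun x => |f x|

end MarkovDefs

section AuxLemmas

variable {E : Type*} [Fintype E] [DecidableEq E] [Nonempty E]

lemma entry_le_matAbs (N : Matrix E E ℝ) (x y : E) : |N x y| ≤ matAbs N :=
  Finset.le_sup' (fun p : E × E => |N p.1 p.2|) (Finset.mem_univ ((x, y) : E × E))

lemma matAbs_nonneg (N : Matrix E E ℝ) : 0 ≤ matAbs N :=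
  le_trans (abs_nonneg _) (entry_le_matAbs N (Classical.arbitrary E) (Classical.arbitrary E))

lemma entry_le_vecAbs (f : E → ℝ) (x : E) : |f x| ≤ vecAbs f :=
  Finset.le_sup' (fun x => |f x|) (Finset.mem_univ x)

lemma vecAbs_nonneg (f : E → ℝ) : 0 ≤ vecAbs f :=
  le_trans (abs_nonneg _) (entry_le_vecAbs f (Classical.arbitrary E))

lemma matAbs_le {N : Matrix E E ℝ} {a : ℝ} (h : ∀ x y, |N x y| ≤ a) : matAbs N ≤ a :=
  Finset.sup'_le _ _ fun p _ => h p.1 p.2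

lemma matAbs_mul_le (A B : Matrix E E ℝ) :
    matAbs (A * B) ≤ (Fintype.card E : ℝ) * matAbs A * matAbs B := by
  apply matAbs_le
  intro x y
  calc |(A * B) x y| = |∑ z, A x z * B z y| := by rw [Matrix.mul_apply]
    _ ≤ ∑ z, |A x z * B z y| := Finset.abs_sum_le_sum_abs _ _
    _ ≤ ∑ _z : E, matAbs A * matAbs B := by
        refine Finset.sum_le_sum fun z _ => ?_
        rw [abs_mul]
        exact mul_le_mul (entry_le_matAbs A x z) (entry_le_matAbs B z y) (abs_nonneg _)
          (matAbs_nonneg A)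
    _ = (Fintype.card E : ℝ) * matAbs A * matAbs B := by
        rw [Finset.sum_const, Finset.card_univ, nsmul_eq_mul]; ring

lemma matAbs_sub_le (A B : Matrix E E ℝ) : matAbs (A - B) ≤ matAbs A + matAbs B := by
  apply matAbs_le
  intro x y
  calc |(A - B) x y| = |A x y - B x y| := by simp [Matrix.sub_apply]
    _ ≤ |A x y| + |B x y| := abs_sub _ _
    _ ≤ _ := add_le_add (entry_le_matAbs A x y) (entry_le_matAbs B x y)

lemma matAbs_piMat_le (f : E → ℝ) : matAbs (PiMat f) ≤ vecAbs f := by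
  apply matAbs_le; intro x y; exact entry_le_vecAbs f y

lemma mul_piMat_zero {Q : Matrix E E ℝ} (h : ∀ x, ∑ y, Q x y = 0) (f : E → ℝ) :
    Q * PiMat f = 0 := by
  ext x y
  simp [Matrix.mul_apply, PiMat, ← Finset.sum_mul, h x]

lemma piMat_mul_q {M Q : Matrix E E ℝ} {π : E → ℝ} (h : IsPseudoInverse M π Q) :
    PiMat π * Q = 0 := by
  obtain ⟨h0, hA, hB⟩ := h
  have e1 : Q * ((1 - M) * Q) = Q := by
    rw [hB, mul_sub, mul_one, mul_piMat_zero h0, sub_zero]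
  have e2 : Q * ((1 - M) * Q) = Q - PiMat π * Q := by
    rw [← mul_assoc, hA, sub_mul, one_mul]
  rw [e2] at e1
  exact sub_eq_self.mp e1

lemma q_diff_identity {M M' Q Q' : Matrix E E ℝ} {π π' : E → ℝ}
    (hq : IsPseudoInverse M π Q) (hq' : IsPseudoInverse M' π' Q') :
    Q' - Q = Q' * ((M' - M) * Q) - PiMat (fun x => π' x - π x) * Q := by
  obtain ⟨h0, hA, hB⟩ := hq
  obtain ⟨h0', hA', hB'⟩ := hq'
  have e1 : Q' * ((1 - M) * Q) = Q' := by
    rw [hB, mul_sub, mul_one, mul_piMat_zero h0', sub_zero]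
  have key : Q' * (1 - M) = (1 - PiMat π') + Q' * (M' - M) := by
    rw [← hA']; noncomm_ring
  have e2 : Q' * ((1 - M) * Q) = Q - PiMat π' * Q + Q' * ((M' - M) * Q) := by
    rw [← mul_assoc, key, add_mul, sub_mul, one_mul, mul_assoc]
  rw [e1] at e2
  have hπQ : PiMat π * Q = 0 := piMat_mul_q ⟨h0, hA, hB⟩
  have hdiff : PiMat (fun x => π' x - π x) = PiMat π' - PiMat π := by
    ext x y; simp [PiMat]
  rw [hdiff, sub_mul (PiMat π') (PiMat π) Q, hπQ, sub_zero]
  calc Q' - Q = (Q - PiMat π' * Q + Q' * ((M' - M) * Q)) - Q := by rw [← e2]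
    _ = Q' * ((M' - M) * Q) - PiMat π' * Q := by abel

end AuxLemmas

/-- If `(M_n)` are indecomposable Markov matrices with pseudo-inverses
`Q_n` and invariant probabilities `π_n` such that (i) `|Q_n|² log n / n → 0`,
(ii) `limsup |M_{n+1} − M_n| · n/log n < ∞` and (iii) `limsup |π_{n+1} − π_n| · sqrt(n/log n) < ∞`,
then `|Q_{n+1} − Q_n| → 0` and `|π_{n+1} − π_n| → 0`, i.e. Hypothesis 1 holds. -/
theorem stmt3 {E : Type*} [Fintype E] [DecidableEq E] [Nonempty E]
    (M : ℕ → Matrix E E ℝ) (hM : ∀ n, IsMarkov (M n)) (hind : ∀ n, Indecomposable (M n))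
    (π : ℕ → E → ℝ) (Q : ℕ → Matrix E E ℝ)
    (hπ : ∀ n, IsInvariantProb (M n) (π n))
    (hQ : ∀ n, IsPseudoInverse (M n) (π n) (Q n))
    (h1 : Tendsto (fun n : ℕ => (matAbs (Q n)) ^ 2 * Real.log n / n) atTop (nhds 0))
    (h2 : ∃ c : ℝ, ∀ᶠ n : ℕ in atTop, matAbs (M (n+1) - M n) * (n / Real.log n) ≤ c)
    (h3 : ∃ c : ℝ, ∀ᶠ n : ℕ in atTop,
      vecAbs (fun x => π (n+1) x - π n x) * Real.sqrt (n / Real.log n) ≤ c) :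
    (Tendsto (fun n : ℕ => (matAbs (Q n)) ^ 2 * Real.log n / n) atTop (nhds 0)) ∧
    (Tendsto (fun n => matAbs (Q (n+1) - Q n)) atTop (nhds 0)) ∧
    (Tendsto (fun n => vecAbs (fun x => π (n+1) x - π n x)) atTop (nhds 0)) := by
  obtain ⟨c2, hc2⟩ := h2
  obtain ⟨c3, hc3⟩ := h3
  set k : ℝ := (Fintype.card E : ℝ) with hk
  have hk0 : 0 ≤ k := Nat.cast_nonneg _
  set c2' : ℝ := max c2 0 with hc2'def
  set c3' : ℝ := max c3 0 with hc3'def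
  -- `s n = |Q n| √(log n / n) → 0`
  have hs : Tendsto (fun n : ℕ => matAbs (Q n) * Real.sqrt (Real.log n / n))
      atTop (nhds 0) := by
    have h1' : Tendsto (fun n : ℕ => Real.sqrt ((matAbs (Q n)) ^ 2 * Real.log n / n))
        atTop (nhds 0) := by
      have := (Real.continuous_sqrt.tendsto 0).comp h1
      rw [Real.sqrt_zero] at this
      exact this
    refine h1'.congr fun n => ?_
    rw [mul_div_assoc, Real.sqrt_mul (sq_nonneg _), Real.sqrt_sq (matAbs_nonneg _)]
  -- shifted version
  have hs1 : Tendsto (fun n : ℕ => matAbs (Q (n + 1)) *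
      Real.sqrt (Real.log ((n + 1 : ℕ)) / ((n + 1 : ℕ)))) atTop (nhds 0) := by
    exact hs.comp (tendsto_add_atTop_nat 1)
  -- `t n = |Q (n+1)| √(log n / n) → 0`
  have ht : Tendsto (fun n : ℕ => matAbs (Q (n + 1)) * Real.sqrt (Real.log n / n))
      atTop (nhds 0) := by
    apply squeeze_zero' (g := fun n : ℕ =>
      Real.sqrt 2 * (matAbs (Q (n + 1)) * Real.sqrt (Real.log ((n + 1 : ℕ)) / ((n + 1 : ℕ)))))
    · exact Eventually.of_forall fun n =>
        mul_nonneg (matAbs_nonneg _) (Real.sqrt_nonneg _)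
    · filter_upwards [eventually_ge_atTop 1] with n hn
      have hn1 : (1 : ℝ) ≤ (n : ℝ) := by exact_mod_cast hn
      have hn0 : (0 : ℝ) < (n : ℝ) := by linarith
      have hn0' : (0 : ℝ) < (n : ℝ) + 1 := by linarith
      have hl0 : 0 ≤ Real.log n := Real.log_nonneg hn1
      have hll : Real.log n ≤ Real.log ((n : ℝ) + 1) := Real.log_le_log hn0 (by linarith)
      have hrle : Real.log n / n ≤ 2 * (Real.log ((n : ℝ) + 1) / ((n : ℝ) + 1)) := by
        rw [mul_div_assoc' 2 _ _, div_le_div_iff₀ hn0 hn0']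
        nlinarith
      have hcast : ((n + 1 : ℕ) : ℝ) = (n : ℝ) + 1 := by push_cast; ring
      calc matAbs (Q (n + 1)) * Real.sqrt (Real.log n / n)
          ≤ matAbs (Q (n + 1)) * Real.sqrt (2 * (Real.log ((n : ℝ) + 1) / ((n : ℝ) + 1))) :=
            mul_le_mul_of_nonneg_left (Real.sqrt_le_sqrt hrle) (matAbs_nonneg _)
        _ = Real.sqrt 2 * (matAbs (Q (n + 1)) * Real.sqrt (Real.log ((n + 1 : ℕ)) / ((n + 1 : ℕ)))) := by
            rw [Real.sqrt_mul (by norm_num : (0:ℝ) ≤ 2), hcast]; ring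
    · have : Tendsto (fun n : ℕ => Real.sqrt 2 * (matAbs (Q (n + 1)) *
          Real.sqrt (Real.log ((n + 1 : ℕ)) / ((n + 1 : ℕ)))))
          atTop (nhds (Real.sqrt 2 * 0)) := tendsto_const_nhds.mul hs1
      simpa using this
  -- eventual bound on the π increments
  have hπbound : ∀ᶠ n : ℕ in atTop,
      vecAbs (fun x => π (n + 1) x - π n x) ≤ c3' * Real.sqrt (Real.log n / n) := by
    filter_upwards [hc3, eventually_ge_atTop 2] with n h3n hn2
    have hn1 : (1 : ℝ) < (n : ℝ) := by exact_mod_cast Nat.lt_of_lt_of_le Nat.one_lt_two hn2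
    have hn0 : (0 : ℝ) < (n : ℝ) := by linarith
    have hL : 0 < Real.log n := Real.log_pos hn1
    have hp : 0 < (n : ℝ) / Real.log n := div_pos hn0 hL
    have hsp : 0 < Real.sqrt ((n : ℝ) / Real.log n) := Real.sqrt_pos.mpr hp
    have hss : Real.sqrt ((n : ℝ) / Real.log n) * Real.sqrt (Real.log n / n) = 1 := by
      rw [← Real.sqrt_mul hp.le, show ((n : ℝ) / Real.log n) * (Real.log n / n) = 1 by
        field_simp]
      exact Real.sqrt_one
    have ha : vecAbs (fun x => π (n + 1) x - π n x) ≤ c3 / Real.sqrt ((n : ℝ) / Real.log n) :=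
      (le_div_iff₀ hsp).mpr h3n
    have hb : c3 / Real.sqrt ((n : ℝ) / Real.log n) = c3 * Real.sqrt (Real.log n / n) := by
      rw [div_eq_iff hsp.ne', mul_assoc, mul_comm (Real.sqrt (Real.log n / n)), hss, mul_one]
    calc vecAbs (fun x => π (n + 1) x - π n x) ≤ c3 * Real.sqrt (Real.log n / n) := by
          rw [← hb]; exact ha
      _ ≤ c3' * Real.sqrt (Real.log n / n) :=
          mul_le_mul_of_nonneg_right (le_max_left _ _) (Real.sqrt_nonneg _)
  -- limit of log n / n
  have hr0 : Tendsto (fun n : ℕ => Real.log n / n) atTop (nhds 0) :=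
    (Real.isLittleO_log_id_atTop.tendsto_div_nhds_zero).comp tendsto_natCast_atTop_atTop
  have hsqrt0 : Tendsto (fun n : ℕ => Real.sqrt (Real.log n / n)) atTop (nhds 0) := by
    have := (Real.continuous_sqrt.tendsto 0).comp hr0
    rw [Real.sqrt_zero] at this
    exact this
  -- third conclusion
  have part3 : Tendsto (fun n => vecAbs (fun x => π (n + 1) x - π n x)) atTop (nhds 0) := by
    apply squeeze_zero' (g := fun n : ℕ => c3' * Real.sqrt (Real.log n / n))
    · exact Eventually.of_forall fun n => vecAbs_nonneg _
    · exact hπbound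
    · simpa using hsqrt0.const_mul c3'
  -- main eventual bound for Q increments
  have hbound : ∀ᶠ n : ℕ in atTop,
      matAbs (Q (n + 1) - Q n) ≤
        k ^ 2 * c2' * ((matAbs (Q (n + 1)) * Real.sqrt (Real.log n / n)) *
          (matAbs (Q n) * Real.sqrt (Real.log n / n))) +
        k * c3' * (matAbs (Q n) * Real.sqrt (Real.log n / n)) := by
    filter_upwards [hc2, hπbound, eventually_ge_atTop 2] with n h2n hπn hn2
    have hn1 : (1 : ℝ) < (n : ℝ) := by exact_mod_cast Nat.lt_of_lt_of_le Nat.one_lt_two hn2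
    have hn0 : (0 : ℝ) < (n : ℝ) := by linarith
    have hL : 0 < Real.log n := Real.log_pos hn1
    have hr : 0 ≤ Real.log n / n := le_of_lt (div_pos hL hn0)
    have hp : 0 < (n : ℝ) / Real.log n := div_pos hn0 hL
    have hM2 : matAbs (M (n + 1) - M n) ≤ c2' * (Real.log n / n) := by
      have ha : matAbs (M (n + 1) - M n) ≤ c2 / ((n : ℝ) / Real.log n) :=
        (le_div_iff₀ hp).mpr h2n
      have hb : c2 / ((n : ℝ) / Real.log n) = c2 * (Real.log n / n) := by
        rw [div_div_eq_mul_div, mul_div_assoc]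
      calc matAbs (M (n + 1) - M n) ≤ c2 * (Real.log n / n) := by rw [← hb]; exact ha
        _ ≤ c2' * (Real.log n / n) := mul_le_mul_of_nonneg_right (le_max_left _ _) hr
    set g : E → ℝ := fun x => π (n + 1) x - π n x with hg
    have hq' : 0 ≤ matAbs (Q (n + 1)) := matAbs_nonneg _
    have hqn : 0 ≤ matAbs (Q n) := matAbs_nonneg _
    have step1 : matAbs ((M (n + 1) - M n) * Q n) ≤
        k * (c2' * (Real.log n / n)) * matAbs (Q n) :=
      le_trans (matAbs_mul_le _ _)
        (mul_le_mul_of_nonneg_right (mul_le_mul_of_nonneg_left hM2 hk0) hqn)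
    have step2 : matAbs (Q (n + 1) * ((M (n + 1) - M n) * Q n)) ≤
        k * matAbs (Q (n + 1)) * (k * (c2' * (Real.log n / n)) * matAbs (Q n)) :=
      le_trans (matAbs_mul_le _ _)
        (mul_le_mul_of_nonneg_left step1 (mul_nonneg hk0 hq'))
    have step3 : matAbs (PiMat g * Q n) ≤
        k * (c3' * Real.sqrt (Real.log n / n)) * matAbs (Q n) :=
      le_trans (matAbs_mul_le _ _)
        (mul_le_mul_of_nonneg_right
          (mul_le_mul_of_nonneg_left (le_trans (matAbs_piMat_le g) hπn) hk0) hqn)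
    have hrr : Real.sqrt (Real.log n / n) * Real.sqrt (Real.log n / n) = Real.log n / n :=
      Real.mul_self_sqrt hr
    calc matAbs (Q (n + 1) - Q n)
        = matAbs (Q (n + 1) * ((M (n + 1) - M n) * Q n) - PiMat g * Q n) := by
          rw [q_diff_identity (hQ n) (hQ (n + 1))]
      _ ≤ matAbs (Q (n + 1) * ((M (n + 1) - M n) * Q n)) + matAbs (PiMat g * Q n) :=
          matAbs_sub_le _ _
      _ ≤ k * matAbs (Q (n + 1)) * (k * (c2' * (Real.log n / n)) * matAbs (Q n)) +
          k * (c3' * Real.sqrt (Real.log n / n)) * matAbs (Q n) := add_le_add step2 step3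
      _ = k ^ 2 * c2' * ((matAbs (Q (n + 1)) * Real.sqrt (Real.log n / n)) *
            (matAbs (Q n) * Real.sqrt (Real.log n / n))) +
          k * c3' * (matAbs (Q n) * Real.sqrt (Real.log n / n)) := by
          linear_combination (-(k ^ 2 * c2' * matAbs (Q (n + 1)) * matAbs (Q n))) * hrr
  have part2 : Tendsto (fun n => matAbs (Q (n + 1) - Q n)) atTop (nhds 0) := by
    apply squeeze_zero' (g := fun n : ℕ =>
      k ^ 2 * c2' * ((matAbs (Q (n + 1)) * Real.sqrt (Real.log n / n)) *
        (matAbs (Q n) * Real.sqrt (Real.log n / n))) +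
      k * c3' * (matAbs (Q n) * Real.sqrt (Real.log n / n)))
    · exact Eventually.of_forall fun n => matAbs_nonneg _
    · exact hbound
    · have := (tendsto_const_nhds (x := k ^ 2 * c2')).mul (ht.mul hs) |>.add
        ((tendsto_const_nhds (x := k * c3')).mul hs)
      simpa using this
  exact ⟨h1, part2, part3⟩
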